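/- arXiv:2511.03082 — 8 statements merged into one kernel-verified Lean document; each statement's English description precedes it below -/
import Mathlib

section
/- For all natural numbers n ≥ 1 and 0 < k < n-1, the Pascalian numbers satisfy B(n,k) = B(n-1,k-1) + B(n-1,k+1), where B(n,k) = C(n, ⌊(n-k)/2⌋). -/
def B (n k : ℕ) : ℕ := Nat.choose n ((n - k) / 2)

/-- With `s + 1 = (n - k) / 2`, this is Pascal's rule `C(n+1, s+1) = C(n, s+1) + C(n, s)`. -/
theorem B_succ_succ (n k : ℕ) (hk : k + 2 ≤ n) :
    B (n + 1) (k + 1) = B n k + B n (k + 2) := by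
  obtain ⟨s, hs⟩ : ∃ s, (n - k) / 2 = s + 1 := ⟨(n - k) / 2 - 1, by omega⟩
  have hs' : (n - (k + 2)) / 2 = s := by omega
  rw [B, B, B, Nat.add_sub_add_right, hs, hs', Nat.choose_succ_succ, add_comm]

theorem pascalian_recursion_general (n k : ℕ) (hk0 : 0 < k) (hk : k < n - 1) :
    B n k = B (n - 1) (k - 1) + B (n - 1) (k + 1) := by
  obtain ⟨m, rfl⟩ : ∃ m, n = m + 1 := ⟨n - 1, by omega⟩
  obtain ⟨j, rfl⟩ : ∃ j, k = j + 1 := ⟨k - 1, by omega⟩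
  simpa using B_succ_succ m j (by omega)

theorem pascalian_recursion (n k : ℕ) (hn : 1 ≤ n) (hk0 : 0 < k) (hk : k < n - 1) :
    B n k = B (n - 1) (k - 1) + B (n - 1) (k + 1) :=
  pascalian_recursion_general n k hk0 hk
end

section
/- For all natural numbers n, the sum over k from 0 to n of B(n,k)^2 equals C(2n, n), where B(n,k) = C(n, ⌊(n-k)/2⌋). -/
open Finset

theorem Finset.sum_range_succ_div_two_of_symm {M : Type*} [AddCommMonoid M] (n : ℕ)
    (f : ℕ → M) (hf : ∀ m ≤ n, f (n - m) = f m) :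
    ∑ j ∈ range (n + 1), f (j / 2) = ∑ m ∈ range (n + 1), f m := by
  refine sum_nbij' (fun j => if Even j then j / 2 else n - j / 2)
    (fun m => if 2 * m ≤ n then 2 * m else 2 * (n - m) + 1) ?_ ?_ ?_ ?_ ?_
  · intro j hj
    simp only [mem_range] at hj ⊢
    split_ifs <;> omega
  · intro m hm
    simp only [mem_range] at hm ⊢
    split_ifs <;> omega
  · intro j hj
    simp only [mem_range] at hj
    split_ifs with h1 h2 h2 <;> simp only [Nat.even_iff] at h1 <;> omega
  · intro m hm
    simp only [mem_range] at hm
    split_ifs with h1 h2 h2 <;> simp only [Nat.even_iff] at h2 <;> omega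
  · intro j hj
    simp only [mem_range] at hj
    split_ifs
    · rfl
    · exact (hf _ (by omega)).symm

theorem B_sub (n j : ℕ) (hj : j ≤ n) : B n (n - j) = n.choose (j / 2) := by
  rw [B, Nat.sub_sub_self hj]

theorem pascalian_sum_of_squares (n : ℕ) :
    ∑ k ∈ Finset.range (n + 1), (B n k) ^ 2 = Nat.choose (2 * n) n := by
  calc ∑ k ∈ range (n + 1), B n k ^ 2
      = ∑ j ∈ range (n + 1), n.choose (j / 2) ^ 2 := by
        rw [← sum_range_reflect]
        refine sum_congr rfl fun j hj => ?_
        rw [Nat.add_sub_cancel, B_sub n j (Nat.lt_succ_iff.mp (mem_range.mp hj))]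
    _ = ∑ m ∈ range (n + 1), n.choose m ^ 2 :=
        sum_range_succ_div_two_of_symm n (fun m => n.choose m ^ 2)
          fun m hm => by rw [Nat.choose_symm hm]
    _ = (2 * n).choose n := Nat.sum_range_choose_sq n
end

section
/- For every natural number n ≥ 1 and every polynomial ring over a commutative ring, the Pascalian polynomial satisfies P_n(x) = (1 + x^2)·P_{n-1}(x) + B(n-1,0)·(1 - x)·x^n, where P_n(x) = Σ_{k=0}^{n} B(n,k)·x^{n-k} and B(n,k) = C(n, ⌊(n-k)/2⌋). -/
open Polynomial

noncomputable def P (R : Type*) [CommRing R] (n : ℕ) : Polynomial R :=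
  ∑ k ∈ Finset.range (n + 1), C ((B n k : R)) * X ^ (n - k)

/-!
Reversing the order of summation, `P_n = ∑_{j ≤ n} C(n, ⌊j/2⌋) X^j`. Since `⌊(j+2)/2⌋ = ⌊j/2⌋ + 1`,
Pascal's rule gives `C(n, ⌊(j+2)/2⌋) = C(n-1, ⌊(j+2)/2⌋) + C(n-1, ⌊j/2⌋)`, so, up to the terms near
the top degree, `P_n = P_{n-1} + X^2 P_{n-1}`. The boundary terms combine to
`C(n-1, ⌊(n-1)/2⌋)(X^n - X^{n+1})` because `C(m, ⌊(m+1)/2⌋) = C(m, ⌊m/2⌋)`.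
-/

namespace Pascalian

lemma choose_succ_add_two_div_two (m j : ℕ) :
    (m + 1).choose ((j + 2) / 2) = m.choose ((j + 2) / 2) + m.choose (j / 2) := by
  rw [show (j + 2) / 2 = j / 2 + 1 by omega, Nat.choose_succ_succ', add_comm]

lemma choose_succ_div_two (m : ℕ) : m.choose ((m + 1) / 2) = m.choose (m / 2) := by
  obtain ⟨t, rfl | rfl⟩ := Nat.even_or_odd' m
  · congr 1
    omega
  · rw [show (2 * t + 1 + 1) / 2 = t + 1 by omega, show (2 * t + 1) / 2 = t by omega,
      Nat.choose_symm_half]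

variable (R : Type*) [CommRing R]

noncomputable def chooseHalfSum (m N : ℕ) : R[X] :=
  ∑ j ∈ Finset.range N, C ((m.choose (j / 2) : R)) * X ^ j

lemma chooseHalfSum_succ (m N : ℕ) :
    chooseHalfSum R m (N + 1) = chooseHalfSum R m N + C ((m.choose (N / 2) : R)) * X ^ N :=
  Finset.sum_range_succ _ _

lemma P_eq_chooseHalfSum (n : ℕ) : P R n = chooseHalfSum R n (n + 1) := by
  rw [chooseHalfSum, ← Finset.sum_range_reflect]
  refine Finset.sum_congr rfl fun k _ => ?_
  rw [B, Nat.add_sub_cancel]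

lemma chooseHalfSum_pascal (m N : ℕ) :
    chooseHalfSum R (m + 1) (N + 2) = chooseHalfSum R m (N + 2) + X ^ 2 * chooseHalfSum R m N := by
  have shift : X ^ 2 * chooseHalfSum R m N =
      ∑ i ∈ Finset.range N, C ((m.choose (i / 2) : R)) * X ^ (i + 2) := by
    rw [chooseHalfSum, Finset.mul_sum]
    exact Finset.sum_congr rfl fun i _ => by ring
  rw [shift]
  simp only [chooseHalfSum, Finset.sum_range_succ' _ (N + 1), Finset.sum_range_succ' _ N,
    add_assoc, Nat.reduceAdd, choose_succ_add_two_div_two, Nat.cast_add, map_add, add_mul,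
    Finset.sum_add_distrib, Nat.zero_div, Nat.reduceDiv, Nat.choose_zero_right]
  ring

end Pascalian

open Pascalian in
theorem pascalian_poly_recursion (R : Type*) [CommRing R] (n : ℕ) (hn : 1 ≤ n) :
    P R n = (1 + X ^ 2) * P R (n - 1) + C ((B (n - 1) 0 : R)) * (1 - X) * X ^ n := by
  obtain ⟨m, rfl⟩ : ∃ m, n = m + 1 := ⟨n - 1, by omega⟩
  have pascal := chooseHalfSum_pascal R m (m + 1)
  rw [chooseHalfSum_succ, chooseHalfSum_succ R m (m + 2), chooseHalfSum_succ R m (m + 1),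
    choose_succ_add_two_div_two, choose_succ_div_two, Nat.cast_add, map_add] at pascal
  rw [Nat.add_sub_cancel, P_eq_chooseHalfSum, P_eq_chooseHalfSum, B, Nat.sub_zero]
  linear_combination pascal
end

section
/- For every complex number z with P_n(z) = 0 and z ≠ -1, we have |z| < 1, where P_n(z) = Σ_{k=0}^n B(n,k)·z^{n-k} and B(n,k) = C(n, ⌊(n-k)/2⌋) and n ≥ 1. -/
noncomputable def Pc (n : ℕ) (z : ℂ) : ℂ :=
  ∑ k ∈ Finset.range (n + 1), (B n k : ℂ) * z ^ (n - k)

open Finset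

lemma Complex.eq_one_of_norm_le_one_of_re_eq_one {w : ℂ} (hw : ‖w‖ ≤ 1) (hre : w.re = 1) :
    w = 1 := by
  have him : w.im = 0 :=
    Complex.abs_re_eq_norm.mp (le_antisymm (Complex.abs_re_le_norm w) (by simpa [hre] using hw))
  exact Complex.ext hre him

lemma one_sub_mul_sum_range_mul_pow {R : Type*} [CommRing R] (c : ℕ → R) (w : R) (n : ℕ) :
    (1 - w) * ∑ k ∈ range (n + 1), c k * w ^ k =
      c 0 - ∑ k ∈ range n, (c k - c (k + 1)) * w ^ (k + 1) - c n * w ^ (n + 1) := by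
  induction n with
  | zero =>
    rw [zero_add, sum_range_one, sum_range_zero]
    ring
  | succ n ih =>
    rw [sum_range_succ, mul_add, ih, sum_range_succ]
    ring

/-- The boundary case of the Eneström–Kakeya theorem. -/
theorem pow_eq_one_of_sum_eq_zero_of_antitone {c : ℕ → ℝ} {n : ℕ}
    (hc : ∀ k < n, c (k + 1) ≤ c k) (hcn : 0 ≤ c n) {w : ℂ} (hw : ‖w‖ ≤ 1)
    (hroot : ∑ k ∈ range (n + 1), (c k : ℂ) * w ^ k = 0) :
    (0 < c n → w ^ (n + 1) = 1) ∧ ∀ k < n, c (k + 1) < c k → w ^ (k + 1) = 1 := by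
  set e : ℕ → ℝ := fun m => 1 - (w ^ m).re
  have hpow : ∀ m, ‖w ^ m‖ ≤ 1 := fun m => by
    rw [norm_pow]; exact pow_le_one₀ (norm_nonneg w) hw
  have he : ∀ m, 0 ≤ e m := fun m => sub_nonneg.mpr ((Complex.re_le_norm _).trans (hpow m))
  have he_eq : ∀ m, e m = 0 → w ^ m = 1 := fun m hm =>
    Complex.eq_one_of_norm_le_one_of_re_eq_one (hpow m) (sub_eq_zero.mp hm).symm
  have hconvex : (c 0 : ℂ) =
      ∑ k ∈ range n, ((c k - c (k + 1) : ℝ) : ℂ) * w ^ (k + 1) + (c n : ℂ) * w ^ (n + 1) := by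
    have h := one_sub_mul_sum_range_mul_pow (fun k => (c k : ℂ)) w n
    rw [hroot, mul_zero] at h
    push_cast
    linear_combination -h
  have hweights : c 0 = ∑ k ∈ range n, (c k - c (k + 1)) + c n := by
    rw [sum_range_sub']; ring
  have hzero : ∑ k ∈ range n, (c k - c (k + 1)) * e (k + 1) + c n * e (n + 1) = 0 := by
    have hre := congrArg Complex.re hconvex
    simp only [Complex.ofReal_re, Complex.add_re, Complex.re_sum, Complex.re_ofReal_mul] at hre
    have hsplit : ∑ k ∈ range n, (c k - c (k + 1)) * e (k + 1) + c n * e (n + 1) =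
        (∑ k ∈ range n, (c k - c (k + 1)) + c n) -
          (∑ k ∈ range n, (c k - c (k + 1)) * (w ^ (k + 1)).re + c n * (w ^ (n + 1)).re) := by
      simp only [e, mul_one_sub, sum_sub_distrib]; ring
    rw [hsplit, ← hweights, ← hre, sub_self]
  have hdrop : ∀ k < n, 0 ≤ (c k - c (k + 1)) * e (k + 1) := fun k hk =>
    mul_nonneg (sub_nonneg.mpr (hc k hk)) (he _)
  obtain ⟨hsum, hlast⟩ := (add_eq_zero_iff_of_nonneg
    (sum_nonneg fun k hk => hdrop k (mem_range.mp hk)) (mul_nonneg hcn (he _))).mp hzero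
  refine ⟨fun hpos => he_eq _ ((mul_eq_zero.mp hlast).resolve_left hpos.ne'), fun k hk hlt => ?_⟩
  have hk0 := (sum_eq_zero_iff_of_nonneg fun k hk => hdrop k (mem_range.mp hk)).mp hsum k
    (mem_range.mpr hk)
  exact he_eq _ ((mul_eq_zero.mp hk0).resolve_left (sub_pos.mpr hlt).ne')

lemma B_succ_le {n k : ℕ} (hk : k < n) : B n (k + 1) ≤ B n k := by
  unfold B
  rcases Nat.even_or_odd (n - k) with ⟨m, hm⟩ | ⟨m, hm⟩
  · rw [show (n - k) / 2 = (n - (k + 1)) / 2 + 1 by omega]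
    exact Nat.choose_le_succ_of_lt_half_left (by omega)
  · rw [show (n - (k + 1)) / 2 = (n - k) / 2 by omega]

lemma Pc_eq_pow_mul_sum_inv_pow (n : ℕ) {z : ℂ} (hz : z ≠ 0) :
    Pc n z = z ^ n * ∑ k ∈ range (n + 1), (B n k : ℂ) * z⁻¹ ^ k := by
  rw [Pc, mul_sum]
  refine sum_congr rfl fun k hk => ?_
  rw [pow_sub₀ z hz (Nat.le_of_lt_succ (mem_range.mp hk)), inv_pow]
  ring

lemma Pc_one_ne_zero (n : ℕ) : Pc n 1 ≠ 0 := by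
  have hpos : 0 < ∑ k ∈ range (n + 1), B n k :=
    sum_pos (fun k _ => Nat.choose_pos (by omega)) nonempty_range_add_one
  rw [Pc]
  simp only [one_pow, mul_one]
  exact_mod_cast hpos.ne'

theorem pascalian_roots_upper_bound (n : ℕ) (hn : 1 ≤ n) (z : ℂ)
    (hz : Pc n z = 0) (hz' : z ≠ -1) : ‖z‖ < 1 := by
  by_contra! hz1
  have hz0 : z ≠ 0 := norm_pos_iff.mp (by linarith)
  have hw : ‖z⁻¹‖ ≤ 1 := by rw [norm_inv]; exact inv_le_one_of_one_le₀ hz1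
  have hroot : ∑ k ∈ range (n + 1), ((B n k : ℝ) : ℂ) * z⁻¹ ^ k = 0 := by
    rw [Pc_eq_pow_mul_sum_inv_pow n hz0] at hz
    exact_mod_cast (mul_eq_zero.mp hz).resolve_left (pow_ne_zero n hz0)
  obtain ⟨hlast, hdrop⟩ := pow_eq_one_of_sum_eq_zero_of_antitone (c := fun k => (B n k : ℝ))
    (fun k hk => by exact_mod_cast B_succ_le hk) (Nat.cast_nonneg _) hw hroot
  have h1 : z⁻¹ ^ (n + 1) = 1 := hlast (by simp [B])
  have h2 : z⁻¹ ^ (n - 1) = 1 := by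
    rcases hn.eq_or_lt with rfl | hn2
    · simp
    · have h := hdrop (n - 2) (by omega)
      rw [show n - 2 + 1 = n - 1 by omega] at h
      refine h ?_
      simp only [B, show (n - (n - 1)) / 2 = 0 by omega, show (n - (n - 2)) / 2 = 1 by omega]
      simpa using hn2
  have hsq : z⁻¹ ^ 2 = 1 := by
    rwa [show n + 1 = n - 1 + 2 by omega, pow_add, h2, one_mul] at h1
  rcases sq_eq_one_iff.mp hsq with h | h
  · exact Pc_one_ne_zero n (by rwa [inv_eq_one.mp h] at hz)
  · exact hz' (by rw [← inv_inv z, h, inv_neg, inv_one])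
end

section
/- For every complex number z with P_n(z) = 0 and z ≠ -1, we have |z| > √2 - 1, where P_n(z) = Σ_{k=0}^n B(n,k)·z^{n-k} and B(n,k) = C(n, ⌊(n-k)/2⌋). -/
/-! The coefficients of `(1 + z) (1 + z²)ⁿ = ∑_{j ≤ 2n+1} C(n, ⌊j/2⌋) zʲ` form a palindrome
with sum `2ⁿ⁺¹`, and `P_n(z) = ∑_{j ≤ n} C(n, ⌊j/2⌋) zʲ` is its lower half. So at a root `z`
of `P_n` the product `(1 + z) (1 + z²)ⁿ` equals the upper half, of modulus at most `2ⁿ |z|ⁿ⁺¹`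
when `|z| ≤ 1`, while its modulus is at least `(1 - |z|) (1 - |z|²)ⁿ`. For `r = √2 - 1` we have
`1 - r² = 2r`, so `|z| ≤ r` would give `(1 - r) (2r)ⁿ ≤ r (2r)ⁿ`, i.e. `r ≥ 1/2`, which is
false. -/

open Finset

theorem Finset.sum_range_two_mul {M : Type*} [AddCommMonoid M] (f : ℕ → M) (N : ℕ) :
    ∑ j ∈ range (2 * N), f j = ∑ i ∈ range N, (f (2 * i) + f (2 * i + 1)) := by
  induction N with
  | zero => simp
  | succ N ih =>
    rw [Nat.mul_succ, sum_range_succ, sum_range_succ, ih, sum_range_succ, add_assoc]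

theorem Pc_eq_sum_choose_div_two (n : ℕ) (z : ℂ) :
    Pc n z = ∑ j ∈ range (n + 1), (n.choose (j / 2) : ℂ) * z ^ j := by
  rw [Pc, ← sum_range_reflect]
  refine sum_congr rfl fun k hk => ?_
  rw [mem_range] at hk
  rw [B, show n + 1 - 1 - k = n - k by omega, Nat.sub_sub_self (by omega)]

theorem one_add_mul_one_add_sq_pow {R : Type*} [CommSemiring R] (n : ℕ) (z : R) :
    (1 + z) * (1 + z ^ 2) ^ n = ∑ j ∈ range (2 * n + 2), (n.choose (j / 2) : R) * z ^ j := by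
  rw [add_comm 1 (z ^ 2), add_pow, mul_sum, show 2 * n + 2 = 2 * (n + 1) by omega,
    sum_range_two_mul]
  refine sum_congr rfl fun i _ => ?_
  rw [show 2 * i / 2 = i by omega, show (2 * i + 1) / 2 = i by omega]
  ring

theorem sum_Ico_choose_div_two (n : ℕ) :
    ∑ j ∈ Ico (n + 1) (2 * n + 2), n.choose (j / 2) = 2 ^ n := by
  have htotal := one_add_mul_one_add_sq_pow n (1 : ℕ)
  have hsymm : ∑ j ∈ Ico (n + 1) (2 * n + 2), n.choose (j / 2)
      = ∑ j ∈ range (n + 1), n.choose (j / 2) := by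
    have h := sum_Ico_reflect (fun j => n.choose (j / 2)) 0 (show n + 1 ≤ 2 * n + 1 + 1 by omega)
    rw [show 2 * n + 1 + 1 - (n + 1) = n + 1 by omega, show 2 * n + 1 + 1 - 0 = 2 * n + 2 by omega,
      Nat.Ico_zero_eq_range] at h
    rw [← h]
    refine sum_congr rfl fun j hj => ?_
    rw [mem_range] at hj
    rw [show (2 * n + 1 - j) / 2 = n - j / 2 by omega, Nat.choose_symm (by omega)]
  rw [← sum_range_add_sum_Ico _ (by omega : n + 1 ≤ 2 * n + 2)] at htotal
  simp only [Nat.cast_id, one_pow, mul_one, Nat.reduceAdd] at htotal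
  rw [← hsymm] at htotal
  omega

theorem norm_sum_Ico_choose_div_two_mul_pow_le (n : ℕ) {z : ℂ} (hz : ‖z‖ ≤ 1) :
    ‖∑ j ∈ Ico (n + 1) (2 * n + 2), (n.choose (j / 2) : ℂ) * z ^ j‖ ≤ 2 ^ n * ‖z‖ ^ (n + 1) :=
  calc _ ≤ ∑ j ∈ Ico (n + 1) (2 * n + 2), (n.choose (j / 2) : ℝ) * ‖z‖ ^ (n + 1) := by
        refine (norm_sum_le _ _).trans (sum_le_sum fun j hj => ?_)
        rw [norm_mul, norm_pow, Complex.norm_natCast]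
        exact mul_le_mul_of_nonneg_left
          (pow_le_pow_of_le_one (norm_nonneg z) hz (mem_Ico.1 hj).1) (Nat.cast_nonneg _)
    _ = 2 ^ n * ‖z‖ ^ (n + 1) := by
        rw [← sum_mul, ← Nat.cast_sum, sum_Ico_choose_div_two]
        norm_cast

theorem one_sub_norm_le_norm_one_add {E : Type*} [SeminormedRing E] [NormOneClass E] (w : E) :
    1 - ‖w‖ ≤ ‖1 + w‖ := by
  simpa using norm_sub_norm_le (1 : E) (-w)

theorem one_sub_norm_mul_pow_le_norm (n : ℕ) {z : ℂ} (hz : ‖z‖ ≤ 1) :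
    (1 - ‖z‖) * (1 - ‖z‖ ^ 2) ^ n ≤ ‖(1 + z) * (1 + z ^ 2) ^ n‖ := by
  have hz2 : ‖z‖ ^ 2 ≤ 1 := pow_le_one₀ (norm_nonneg z) hz
  have h2 := one_sub_norm_le_norm_one_add (z ^ 2)
  rw [norm_pow] at h2
  rw [norm_mul, norm_pow]
  exact mul_le_mul (one_sub_norm_le_norm_one_add z) (pow_le_pow_left₀ (by linarith) h2 n)
    (pow_nonneg (by linarith) n) (norm_nonneg _)

theorem one_sub_norm_mul_pow_le_of_Pc_eq_zero {n : ℕ} {z : ℂ} (hz : Pc n z = 0)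
    (hz1 : ‖z‖ ≤ 1) : (1 - ‖z‖) * (1 - ‖z‖ ^ 2) ^ n ≤ 2 ^ n * ‖z‖ ^ (n + 1) := by
  have htail : (1 + z) * (1 + z ^ 2) ^ n
      = ∑ j ∈ Ico (n + 1) (2 * n + 2), (n.choose (j / 2) : ℂ) * z ^ j := by
    rw [one_add_mul_one_add_sq_pow, ← sum_range_add_sum_Ico _ (by omega : n + 1 ≤ 2 * n + 2),
      ← Pc_eq_sum_choose_div_two, hz, zero_add]
  calc _ ≤ ‖(1 + z) * (1 + z ^ 2) ^ n‖ := one_sub_norm_mul_pow_le_norm n hz1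
    _ ≤ 2 ^ n * ‖z‖ ^ (n + 1) := htail ▸ norm_sum_Ico_choose_div_two_mul_pow_le n hz1

theorem pascalian_roots_lower_bound_general (n : ℕ) (z : ℂ)
    (hz : Pc n z = 0) : Real.sqrt 2 - 1 < ‖z‖ := by
  set r := Real.sqrt 2 - 1
  have hsqrt : Real.sqrt 2 ^ 2 = 2 := Real.sq_sqrt zero_le_two
  have hr_sq : 1 - r ^ 2 = 2 * r := by linear_combination -hsqrt
  have hr_pos : 0 < r := by nlinarith [Real.sqrt_nonneg 2]
  have hr_half : r < 1 / 2 := by nlinarith [Real.sqrt_nonneg 2]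
  clear_value r
  by_contra! hzr
  have hbound : (1 - r) * (2 * r) ^ n ≤ r * (2 * r) ^ n :=
    calc (1 - r) * (2 * r) ^ n = (1 - r) * (1 - r ^ 2) ^ n := by rw [hr_sq]
      _ ≤ (1 - ‖z‖) * (1 - ‖z‖ ^ 2) ^ n := by
          have h1r2 : 0 ≤ 1 - r ^ 2 := by rw [hr_sq]; positivity
          gcongr
          linarith
      _ ≤ 2 ^ n * ‖z‖ ^ (n + 1) := one_sub_norm_mul_pow_le_of_Pc_eq_zero hz (by linarith)
      _ ≤ 2 ^ n * r ^ (n + 1) := by gcongr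
      _ = r * (2 * r) ^ n := by ring
  have := le_of_mul_le_mul_right hbound (by positivity)
  linarith

theorem pascalian_roots_lower_bound (n : ℕ) (z : ℂ)
    (hz : Pc n z = 0) (hz' : z ≠ -1) : Real.sqrt 2 - 1 < ‖z‖ :=
  pascalian_roots_lower_bound_general n z hz
end

section
/- For n ≥ 2, if z is a complex number with P_n(z) = 0 and P_{n-2}(z) = 0, then z = -1. -/
/-!
Read backwards, `Pc n z` is `Q n z = pascalPartial n (n + 1) z`, the sum of the first `n + 1`
terms of `(1 + z) (1 + z²)ⁿ = ∑ⱼ C(n, ⌊j/2⌋) zʲ`. Pascal's rule gives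
`Q (N + 2) = (1 + z²)² Q N + z^(N+1) (1 - z) (a z² + (a + b) z + a)`, where
`a = C(N, ⌊N/2⌋) ≥ b = C(N, ⌊N/2⌋ + 1)`, so a common root `z ∉ {0, 1}` of `Q N` and `Q (N + 2)`
is a root of this palindromic quadratic. If `a = b` the quadratic is `a (z + 1)²`. Otherwise its
discriminant is negative, so `z̄ = z⁻¹`, hence `Q N z⁻¹ = conj (Q N z) = 0`; the symmetry
`C(N, ⌊j/2⌋) = C(N, ⌊(2N + 1 - j)/2⌋)` of the full expansion then gives
`(1 + z) (1 + z²)^N = Q N z + z^(2N+1) Q N z⁻¹ = 0`, and `z = ±i` does not solve the quadratic.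
-/

open Finset ComplexConjugate

section CommSemiring

variable {R : Type*} [CommSemiring R]

def pascalPartial (n m : ℕ) (x : R) : R :=
  ∑ j ∈ range m, (n.choose (j / 2) : R) * x ^ j

theorem pascalPartial_succ (n m : ℕ) (x : R) :
    pascalPartial n (m + 1) x = pascalPartial n m x + (n.choose (m / 2) : R) * x ^ m :=
  sum_range_succ _ _

theorem pascalPartial_add_two (n m : ℕ) (x : R) :
    pascalPartial n (m + 2) x
      = ∑ j ∈ range m, (n.choose (j / 2 + 1) : R) * x ^ (j + 2) + x + 1 := by
  simp only [pascalPartial, sum_range_succ' _ (m + 1), sum_range_succ' _ m]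
  simp [Nat.add_div_right, add_assoc]

theorem pascalPartial_succ_add_two (n m : ℕ) (x : R) :
    pascalPartial (n + 1) (m + 2) x = pascalPartial n (m + 2) x + x ^ 2 * pascalPartial n m x := by
  rw [pascalPartial_add_two, pascalPartial_add_two, pascalPartial, mul_sum]
  simp only [Nat.choose_succ_succ', Nat.cast_add, add_mul, sum_add_distrib]
  have hshift : ∑ j ∈ range m, (n.choose (j / 2) : R) * x ^ (j + 2)
      = ∑ j ∈ range m, x ^ 2 * ((n.choose (j / 2) : R) * x ^ j) :=
    sum_congr rfl fun j _ => by ring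
  rw [hshift]
  ring

theorem pascalPartial_two_mul_add_two (n : ℕ) (x : R) :
    pascalPartial n (2 * n + 2) x = (1 + x) * (1 + x ^ 2) ^ n := by
  induction n with
  | zero => simp [pascalPartial, sum_range_succ]
  | succ n ih =>
    have hvanish : pascalPartial n (2 * n + 4) x = pascalPartial n (2 * n + 2) x := by
      simp only [pascalPartial_succ, Nat.choose_eq_zero_of_lt (show n < (2 * n + 2) / 2 by omega),
        Nat.choose_eq_zero_of_lt (show n < (2 * n + 3) / 2 by omega)]
      simp
    rw [show 2 * (n + 1) + 2 = 2 * n + 2 + 2 by ring, pascalPartial_succ_add_two,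
      show 2 * n + 2 + 2 = 2 * n + 4 by ring, hvanish, ih]
    ring

theorem map_pascalPartial {S : Type*} [CommSemiring S] (f : R →+* S) (n m : ℕ) (x : R) :
    f (pascalPartial n m x) = pascalPartial n m (f x) := by
  simp [pascalPartial]

theorem ne_zero_of_pascalPartial_eq_zero [Nontrivial R] {n m : ℕ} {x : R}
    (h : pascalPartial n (m + 1) x = 0) : x ≠ 0 := by
  rintro rfl
  simp [pascalPartial, sum_range_succ'] at h

theorem pascalPartial_one_ne_zero [CharZero R] (n m : ℕ) :
    pascalPartial n (m + 1) (1 : R) ≠ 0 := by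
  simp only [pascalPartial, one_pow, mul_one]
  exact_mod_cast (sum_pos' (fun _ _ => Nat.zero_le _) ⟨0, by simp⟩).ne'

end CommSemiring

theorem choose_succ_div_two (N : ℕ) : N.choose ((N + 1) / 2) = N.choose (N / 2) := by
  rw [show (N + 1) / 2 = N - N / 2 by omega, Nat.choose_symm (Nat.div_le_self N 2)]

theorem pascalPartial_shift_two {R : Type*} [CommRing R] (N : ℕ) (x : R) :
    pascalPartial (N + 2) (N + 3) x = (1 + x ^ 2) ^ 2 * pascalPartial N (N + 1) x
      + x ^ (N + 1) * (1 - x) * ((N.choose (N / 2) : R) * x ^ 2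
        + ((N.choose (N / 2) : R) + N.choose (N / 2 + 1)) * x + N.choose (N / 2)) := by
  have e1 := pascalPartial_succ_add_two (N + 1) (N + 1) x
  have e2 := pascalPartial_succ (N + 1) (N + 1 + 1) x
  have e3 := pascalPartial_succ_add_two N N x
  have e4 := pascalPartial_succ N (N + 1) x
  have e5 := pascalPartial_succ N N x
  have e6 := pascalPartial_succ (N + 1) (N + 1) x
  rw [choose_succ_div_two] at e4
  rw [← choose_succ_div_two (N + 1)] at e6
  rw [show (N + 1 + 1) / 2 = N / 2 + 1 by omega, Nat.choose_succ_succ'] at e2 e6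
  push_cast at e2 e6
  linear_combination e1 + e2 - x ^ 2 * e6 + (1 + x ^ 2) * (e3 + e4 - x ^ 2 * e5)

theorem pascalPartial_add_pow_mul_inv {K : Type*} [Field K] (n : ℕ) {x : K} (hx : x ≠ 0) :
    pascalPartial n (n + 1) x + x ^ (2 * n + 1) * pascalPartial n (n + 1) x⁻¹
      = (1 + x) * (1 + x ^ 2) ^ n := by
  have htail : x ^ (2 * n + 1) * pascalPartial n (n + 1) x⁻¹
      = ∑ i ∈ range (n + 1), (n.choose ((n + 1 + i) / 2) : K) * x ^ (n + 1 + i) := by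
    rw [pascalPartial, mul_sum, ← sum_range_reflect]
    refine sum_congr rfl fun i hi => ?_
    have hi : i ≤ n := Nat.lt_succ_iff.mp (mem_range.mp hi)
    rw [show (n + 1 + i) / 2 = n - (n - i) / 2 by omega, Nat.choose_symm (by omega),
      show 2 * n + 1 = (n + 1 + i) + (n - i) by omega, pow_add, inv_pow,
      show n + 1 - 1 - i = n - i by omega]
    field_simp
  rw [htail, ← pascalPartial_two_mul_add_two, show 2 * n + 2 = (n + 1) + (n + 1) by ring]
  simp only [pascalPartial]
  rw [sum_range_add _ (n + 1) (n + 1)]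

theorem conj_eq_inv_of_palindromic_quadratic {a b : ℝ} (hdisc : b ^ 2 < 4 * a ^ 2) {z : ℂ}
    (hz : (a : ℂ) * z ^ 2 + b * z + a = 0) : conj z = z⁻¹ := by
  have ha : (a : ℂ) ≠ 0 := by
    rw [Complex.ofReal_ne_zero]; rintro rfl; nlinarith
  have hz_conj : (a : ℂ) * conj z ^ 2 + b * conj z + a = 0 := by
    simpa using congrArg conj hz
  have hz_not_real : z - conj z ≠ 0 := by
    rw [sub_ne_zero, ne_comm, Ne, Complex.conj_eq_iff_re]
    intro hre
    rw [← hre] at hz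
    have hre : a * z.re ^ 2 + b * z.re + a = 0 := by exact_mod_cast hz
    have hsq : (2 * a * z.re + b) ^ 2 = b ^ 2 - 4 * a ^ 2 := by linear_combination 4 * a * hre
    nlinarith [sq_nonneg (2 * a * z.re + b)]
  have hsum : (a : ℂ) * (z + conj z) + b = 0 :=
    (mul_eq_zero.mp (by linear_combination hz - hz_conj)).resolve_left hz_not_real
  have hprod : z * conj z = 1 := by
    have h : (a : ℂ) * (z * conj z - 1) = 0 := by linear_combination z * hsum - hz
    linear_combination (mul_eq_zero.mp h).resolve_left ha
  exact eq_inv_of_mul_eq_one_right hprod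

theorem Pc_eq_pascalPartial (n : ℕ) (z : ℂ) : Pc n z = pascalPartial n (n + 1) z := by
  rw [Pc, pascalPartial, ← sum_range_reflect]
  refine sum_congr rfl fun k hk => ?_
  rw [B, Nat.add_sub_cancel, Nat.sub_sub_self (Nat.lt_succ_iff.mp (mem_range.mp hk))]

theorem quadratic_eq_zero_of_pascalPartial_eq_zero {K : Type*} [CommRing K] [IsDomain K]
    [CharZero K] {N : ℕ} {x : K} (hN : pascalPartial N (N + 1) x = 0)
    (hN2 : pascalPartial (N + 2) (N + 3) x = 0) :
    (N.choose (N / 2) : K) * x ^ 2 + ((N.choose (N / 2) : K) + N.choose (N / 2 + 1)) * x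
      + N.choose (N / 2) = 0 := by
  have hx0 := ne_zero_of_pascalPartial_eq_zero hN
  have hx1 : 1 - x ≠ 0 := by
    rw [sub_ne_zero]
    rintro rfl
    exact pascalPartial_one_ne_zero N N hN
  have h := pascalPartial_shift_two N x
  rw [hN, hN2, mul_zero, zero_add, eq_comm] at h
  simpa [hx0, hx1] using h

theorem one_add_mul_one_add_sq_pow_eq_zero {N : ℕ} {z : ℂ} (h : pascalPartial N (N + 1) z = 0)
    (hconj : conj z = z⁻¹) : (1 + z) * (1 + z ^ 2) ^ N = 0 := by
  rw [← pascalPartial_add_pow_mul_inv N (ne_zero_of_pascalPartial_eq_zero h), ← hconj,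
    ← map_pascalPartial, h, map_zero, mul_zero, add_zero]

theorem pascalian_shift_two_common_root (n : ℕ) (hn : 2 ≤ n) (z : ℂ)
    (h1 : Pc n z = 0) (h2 : Pc (n - 2) z = 0) : z = -1 := by
  obtain ⟨N, rfl⟩ : ∃ N, n = N + 2 := ⟨n - 2, by omega⟩
  rw [Nat.add_sub_cancel, Pc_eq_pascalPartial] at h2
  rw [Pc_eq_pascalPartial] at h1
  set a := N.choose (N / 2)
  set b := N.choose (N / 2 + 1)
  have hquad : (a : ℂ) * z ^ 2 + (a + b) * z + a = 0 :=
    quadratic_eq_zero_of_pascalPartial_eq_zero h2 h1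
  have ha : 0 < a := Nat.choose_pos (Nat.div_le_self N 2)
  have hba_le : b ≤ a := Nat.choose_le_middle _ _
  rcases hba_le.eq_or_lt with hba | hba
  · rw [hba] at hquad
    have h : (a : ℂ) * (z + 1) ^ 2 = 0 := by linear_combination hquad
    simpa [ha.ne', add_eq_zero_iff_eq_neg] using h
  have hdisc : ((a + b : ℕ) : ℝ) ^ 2 < 4 * (a : ℝ) ^ 2 := by
    have hba' : (b : ℝ) < a := by exact_mod_cast hba
    push_cast
    nlinarith [b.cast_nonneg (α := ℝ)]
  have hconj := conj_eq_inv_of_palindromic_quadratic hdisc (by simpa using hquad)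
  rcases mul_eq_zero.mp (one_add_mul_one_add_sq_pow_eq_zero h2 hconj) with h | h
  · linear_combination h
  · have hsq : 1 + z ^ 2 = 0 := pow_eq_zero_iff'.mp h |>.1
    have h : ((a + b : ℕ) : ℂ) * z = 0 := by push_cast; linear_combination hquad - a * hsq
    simp only [mul_eq_zero, ne_zero_of_pascalPartial_eq_zero h2, or_false] at h
    norm_cast at h
    omega
end

section
/- For every natural number n ≡ 3 (mod 4), there exists a real number x ∈ (0,1) with q_n(-x^2) = 0, where q_n(x) = Σ_{k=0}^{⌊n/2⌋} C(n,k)·x^k; equivalently, P_n has a purely imaginary root. -/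
noncomputable def qf (n : ℕ) (x : ℝ) : ℝ :=
  ∑ k ∈ Finset.range (n / 2 + 1), (Nat.choose n k : ℝ) * x ^ k

/-! `qf n (-1)` is a truncated alternating sum of binomial coefficients, which telescopes by
Pascal's rule to `± C(n-1, ⌊n/2⌋)`; for `n ≡ 3 (mod 4)` the sign is negative. Since `qf n 0 = 1`,
the intermediate value theorem applied to `x ↦ qf n (-x²)` on `[0, 1]` gives the root. -/

theorem continuous_qf (n : ℕ) : Continuous (qf n) := by
  unfold qf
  fun_prop

theorem qf_zero (n : ℕ) : qf n 0 = 1 := by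
  simp [qf, Finset.sum_range_succ']

theorem qf_succ_neg_one (n : ℕ) :
    qf (n + 1) (-1) = (-1) ^ ((n + 1) / 2) * n.choose ((n + 1) / 2) := by
  have h := Int.alternating_sum_range_choose_eq_choose (n := n) (m := (n + 1) / 2)
  unfold qf
  simp_rw [mul_comm _ ((-1 : ℝ) ^ _)]
  exact_mod_cast h

theorem qf_neg_one_neg {n : ℕ} (hn : n % 4 = 3) : qf n (-1) < 0 := by
  obtain ⟨m, rfl⟩ : ∃ m, n = 4 * m + 2 + 1 := ⟨n / 4, by omega⟩
  have hhalf : (4 * m + 2 + 1) / 2 = 2 * m + 1 := by omega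
  rw [qf_succ_neg_one, hhalf, pow_succ, pow_mul, neg_one_sq, one_pow, one_mul, neg_one_mul,
    neg_neg_iff_pos, Nat.cast_pos]
  exact Nat.choose_pos (by omega)

theorem pascalian_imaginary_root_three_mod_four (n : ℕ) (hn : n % 4 = 3) :
    ∃ x : ℝ, 0 < x ∧ x < 1 ∧ qf n (-(x ^ 2)) = 0 := by
  set f : ℝ → ℝ := fun x => qf n (-(x ^ 2))
  have hcont : ContinuousOn f (Set.Icc 0 1) :=
    ((continuous_qf n).comp (continuous_pow 2).neg).continuousOn
  have hsign : (0 : ℝ) ∈ Set.Ioo (f 1) (f 0) := by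
    constructor
    · simpa [f] using qf_neg_one_neg hn
    · simp [f, qf_zero]
  obtain ⟨x, ⟨hx0, hx1⟩, hroot⟩ := intermediate_value_Ioo' zero_le_one hcont hsign
  exact ⟨x, hx0, hx1, hroot⟩
end

section
/- For every odd natural number m ≥ 1, the central binomial coefficient C(2m+1, m) is not a perfect square. (More precisely: for all m ≥ 1, there is no natural number s with s^2 = C(2m+1, m).) -/
/-! By Bertrand's postulate there is a prime `p` with `m + 1 < p ≤ 2m + 1`. It divides
`(2m+1)! / (m! (m+1)!)` exactly once, since `p ∤ m! (m+1)!` and `p² > 2m + 1`, so `C(2m+1, m)`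
has an odd `p`-adic valuation and is not a square. -/

namespace Nat

theorem factorization_sq_ne_one (s p : ℕ) : (s ^ 2).factorization p ≠ 1 := by
  rw [factorization_pow, Finsupp.smul_apply, smul_eq_mul]
  omega

theorem factorization_choose_eq_one {n k p : ℕ} (hp : p.Prime) (hk : k < p) (hnk : n - k < p)
    (hpn : p ≤ n) (hn : n < p ^ 2) : (choose n k).factorization p = 1 := by
  have hdvd : p ∣ choose n k := hp.dvd_choose hk hnk hpn
  have hpos : choose n k ≠ 0 := (choose_pos (by omega)).ne'
  exact le_antisymm (factorization_choose_le_one hn) (hp.factorization_pos_of_dvd hpos hdvd)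

theorem exists_prime_factorization_choose_two_mul_add_one_eq_one {m : ℕ} (hm : 1 ≤ m) :
    ∃ p, p.Prime ∧ (choose (2 * m + 1) m).factorization p = 1 := by
  obtain ⟨p, hp, hlt, hle⟩ := exists_prime_lt_and_le_two_mul (m + 1) (by omega)
  have hp_ne : p ≠ 2 * (m + 1) := by
    rintro rfl
    exact not_prime_mul (by omega) (by omega) hp
  refine ⟨p, hp, factorization_choose_eq_one hp (by omega) (by omega) (by omega) ?_⟩
  nlinarith

end Nat

theorem central_binomial_not_square (m : ℕ) (hm : 1 ≤ m) :
    ¬ ∃ s : ℕ, s ^ 2 = Nat.choose (2 * m + 1) m := by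
  rintro ⟨s, hs⟩
  obtain ⟨p, -, hp⟩ := Nat.exists_prime_factorization_choose_two_mul_add_one_eq_one hm
  exact Nat.factorization_sq_ne_one s p (hs ▸ hp)
end
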